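/- If f(z) = Σ_{k≥1} a_k z^{2^k} is analytic on the unit disk and f' belongs to the Bergman space A^1(𝔻), then Σ_{k≥1} |a_k| < ∞. -/

import Mathlib

open Complex Metric MeasureTheory Real Set
open scoped Classical NNReal ENNReal

noncomputable def circInt (f : ℂ → ℂ) (p r : ℝ) : ℝ :=
  (∫ t in (0:ℝ)..(2*π), ‖f ((r : ℂ) * Complex.exp (t * Complex.I))‖ ^ p) / (2*π)

noncomputable def hardyNorm (p : ℝ) (f : ℂ → ℂ) : ℝ :=
  ⨆ r : Ioo (0:ℝ) 1, (circInt f p (r : ℝ)) ^ (1/p)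

/-- `f` belongs to the Hardy space `H^p` of the unit disk. -/
def MemHp (p : ℝ) (f : ℂ → ℂ) : Prop :=
  DifferentiableOn ℂ f (ball (0:ℂ) 1) ∧
    BddAbove (range fun r : Ioo (0:ℝ) 1 => (circInt f p (r : ℝ)) ^ (1/p))

noncomputable def supNorm (f : ℂ → ℂ) : ℝ := ⨆ z : ball (0:ℂ) 1, ‖f (z : ℂ)‖

/-- `f` belongs to `H^∞` of the unit disk. -/
def MemHinf (f : ℂ → ℂ) : Prop :=
  DifferentiableOn ℂ f (ball (0:ℂ) 1) ∧ BddAbove (range fun z : ball (0:ℂ) 1 => ‖f (z : ℂ)‖)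

/-- Number of solutions of `f z = w` in the unit disk, counted with multiplicity. -/
noncomputable def valCount (f : ℂ → ℂ) (w : ℂ) : ℝ≥0∞ :=
  ∑' z : ball (0:ℂ) 1,
    if h : AnalyticAt ℂ (fun ζ => f ζ - w) (z : ℂ) then (analyticOrderAt (fun ζ => f ζ - w) (z : ℂ) : ℝ≥0∞) else 0

/-- `f` is mean `n`-valent in the unit disk. -/
def MeanValent (n : ℝ) (f : ℂ → ℂ) : Prop :=
  ∀ R > 0, (1/π) * ∫ r in (0:ℝ)..R, (∫ t in (0:ℝ)..(2*π),
      (valCount f ((r : ℂ) * Complex.exp (t * Complex.I))).toReal) * r ≤ n * R^2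

noncomputable def maxMod (f : ℂ → ℂ) (r : ℝ) : ℝ := ⨆ z : sphere (0:ℂ) r, ‖f (z : ℂ)‖

/-- `B` is a finite Blaschke product of degree `n`. -/
def IsBlaschke (n : ℕ) (B : ℂ → ℂ) : Prop :=
  ∃ (c : ℂ) (a : Fin n → ℂ), ‖c‖ = 1 ∧ (∀ k, ‖a k‖ < 1) ∧
    ∀ z, B z = c * ∏ k, (z - a k) / (1 - (starRingEnd ℂ) (a k) * z)

/-- `g` coincides on the unit disk with a rational function of degree at most `n`
whose poles lie outside the closed unit disk. -/
def IsRatOut (n : ℕ) (g : ℂ → ℂ) : Prop :=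
  ∃ P Q : Polynomial ℂ, P.natDegree ≤ n ∧ Q.natDegree ≤ n ∧
    (∀ z : ℂ, ‖z‖ ≤ 1 → Q.eval z ≠ 0) ∧ ∀ z ∈ ball (0:ℂ) 1, g z = P.eval z / Q.eval z

/-!
Write `n = 2^(k+1)` and `M(ρ) = (2π)⁻¹ ∫ |f'(ρ e^{iθ})| dθ`. Since `f` is given by a power series
on the disk, the Cauchy estimate for `f'` gives `n |a_{k+1}| ρ^(n-1) ≤ M(ρ)` for every `ρ < 1`.
On the annulus `1 - 2^-(k+2) ≤ ρ < 1 - 2^-(k+3)` Bernoulli's inequality gives `ρ^n ≥ 1/2`, so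
in polar coordinates the integral of `|f'|` over that annulus is at least `π n |a_{k+1}|` times
its width `2^-(k+3) = 1/(4n)`, i.e. at least `(π/4) |a_{k+1}|`. These annuli are disjoint, so
`(π/4) ∑ |a_{k+1}| ≤ ∫_𝔻 |f'| dA < ∞`.
-/

theorem hasFPowerSeriesOnBall_ofScalars_of_hasSum {f : ℂ → ℂ} {c : ℕ → ℂ} {R : ℝ≥0} (hR : 0 < R)
    (hf : ∀ z ∈ ball (0 : ℂ) R, HasSum (fun n => c n * z ^ n) (f z)) :
    HasFPowerSeriesOnBall f (.ofScalars ℂ c) 0 R where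
  r_le := by
    refine ENNReal.le_of_forall_nnreal_lt fun r hr => ?_
    refine FormalMultilinearSeries.le_radius_of_summable _ ?_
    have hr' : ((r : ℝ) : ℂ) ∈ ball (0 : ℂ) R := by
      simpa [abs_of_nonneg r.coe_nonneg] using hr
    simpa [FormalMultilinearSeries.ofScalars_norm, abs_of_nonneg r.coe_nonneg] using
      (hf _ hr').summable.norm
  r_pos := mod_cast hR
  hasSum := by
    intro y hy
    simpa [FormalMultilinearSeries.ofScalars_apply_eq, mul_comm] using hf y (by simpa using hy)

theorem HasFPowerSeriesOnBall.norm_mul_pow_le_integral_norm_circleMap {E : Type*}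
    [NormedAddCommGroup E] [NormedSpace ℂ E] [CompleteSpace E] {g : ℂ → E}
    {p : FormalMultilinearSeries ℂ ℂ E} {r : ℝ≥0∞} (hg : HasFPowerSeriesOnBall g p 0 r)
    {ρ : ℝ} (hρ : 0 < ρ) (hρr : ENNReal.ofReal ρ < r) (n : ℕ) :
    ‖p n‖ * ρ ^ n ≤ (2 * π)⁻¹ * ∫ θ in 0..2 * π, ‖g (circleMap 0 ρ θ)‖ := by
  lift ρ to ℝ≥0 using hρ.le
  have hsub : closedBall (0 : ℂ) ρ ⊆ eball 0 r := fun z hz =>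
    lt_of_le_of_lt (by simpa [edist_dist] using ENNReal.ofReal_le_ofReal (mem_closedBall.1 hz)) hρr
  have hcauchy : HasFPowerSeriesOnBall g (cauchyPowerSeries g 0 ρ) 0 ρ :=
    (hg.differentiableOn.mono hsub).hasFPowerSeriesOnBall (mod_cast hρ)
  rw [hg.hasFPowerSeriesAt.eq_formalMultilinearSeries hcauchy.hasFPowerSeriesAt]
  have := norm_cauchyPowerSeries_le g 0 ρ n
  rw [abs_of_pos hρ, inv_pow] at this
  exact (le_mul_inv_iff₀ (by positivity)).1 this

theorem HasFPowerSeriesOnBall.mul_norm_coeff_mul_pow_le_integral_norm_deriv {f : ℂ → ℂ}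
    {p : FormalMultilinearSeries ℂ ℂ ℂ} {r : ℝ≥0∞} (hf : HasFPowerSeriesOnBall f p 0 r)
    {ρ : ℝ} (hρ : 0 < ρ) (hρr : ENNReal.ofReal ρ < r) (n : ℕ) :
    n * ‖p.coeff n‖ * ρ ^ n ≤ ρ * ((2 * π)⁻¹ * ∫ θ in 0..2 * π, ‖deriv f (circleMap 0 ρ θ)‖) := by
  have hmean : 0 ≤ (2 * π)⁻¹ * ∫ θ in 0..2 * π, ‖deriv f (circleMap 0 ρ θ)‖ :=
    mul_nonneg (by positivity)
      (intervalIntegral.integral_nonneg (by positivity) fun _ _ => norm_nonneg _)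
  cases n with
  | zero => simpa using mul_nonneg hρ.le hmean
  | succ n =>
    have hcoeff : (n + 1) * ‖p.coeff (n + 1)‖ ≤ ‖p.derivSeries n‖ := by
      rw [FormalMultilinearSeries.norm_apply_eq_norm_coef]
      simpa [norm_smul, ← Nat.cast_add_one, -Nat.cast_add] using
        (p.derivSeries.coeff n).le_opNorm 1
    have := hf.fderiv.norm_mul_pow_le_integral_norm_circleMap hρ hρr n
    simp only [← norm_deriv_eq_norm_fderiv] at this
    calc (↑(n + 1) : ℝ) * ‖p.coeff (n + 1)‖ * ρ ^ (n + 1)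
        = ρ * ((n + 1) * ‖p.coeff (n + 1)‖ * ρ ^ n) := by push_cast; ring
      _ ≤ ρ * (‖p.derivSeries n‖ * ρ ^ n) := by gcongr
      _ ≤ _ := mul_le_mul_of_nonneg_left this hρ.le

theorem Complex.polarCoord_symm_eq_circleMap (p : ℝ × ℝ) :
    Complex.polarCoord.symm p = circleMap 0 p.1 p.2 := by
  simp [circleMap, Complex.exp_mul_I, ← Complex.ofReal_cos, ← Complex.ofReal_sin]

theorem setLIntegral_ball_eq_lintegral_circleMap {G : ℂ → ℝ≥0∞} (hG : Measurable G) (R : ℝ) :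
    ∫⁻ z in ball (0 : ℂ) R, G z =
      ∫⁻ ρ in Ioo 0 R, ENNReal.ofReal ρ * ∫⁻ θ in Ioo (-π) π, G (circleMap 0 ρ θ) := by
  have hmeas : Measurable fun p : ℝ × ℝ =>
      ENNReal.ofReal p.1 • (ball (0 : ℂ) R).indicator G (circleMap 0 p.1 p.2) := by
    have : Continuous fun p : ℝ × ℝ => circleMap 0 p.1 p.2 := by unfold circleMap; fun_prop
    exact (ENNReal.measurable_ofReal.comp measurable_fst).smul
      ((hG.indicator measurableSet_ball).comp this.measurable)
  rw [← lintegral_indicator measurableSet_ball, ← Complex.lintegral_comp_polarCoord_symm,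
    polarCoord_target, Measure.volume_eq_prod]
  simp only [Complex.polarCoord_symm_eq_circleMap]
  rw [setLIntegral_prod _ hmeas.aemeasurable, ← Ioi_inter_Iio (a := (0 : ℝ)), inter_comm,
    ← setLIntegral_indicator measurableSet_Iio]
  refine setLIntegral_congr_fun measurableSet_Ioi fun ρ (hρ : 0 < ρ) => ?_
  by_cases hρR : ρ < R
  · simp [indicator_of_mem, hρR, abs_of_pos hρ, lintegral_const_mul' _ _ ENNReal.ofReal_ne_top]
  · simp [indicator_of_notMem, hρR, abs_of_pos hρ]

theorem ofReal_integral_norm_circleMap_le_lintegral {E : Type*} [NormedAddCommGroup E]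
    (g : ℂ → E) (ρ : ℝ) :
    ENNReal.ofReal (∫ θ in 0..2 * π, ‖g (circleMap 0 ρ θ)‖) ≤
      ∫⁻ θ in Ioo (-π) π, ‖g (circleMap 0 ρ θ)‖ₑ := by
  have hper : Function.Periodic (fun θ => ‖g (circleMap 0 ρ θ)‖) (2 * π) := fun θ => by
    simp [periodic_circleMap 0 ρ θ]
  have hshift := hper.intervalIntegral_add_eq 0 (-π)
  rw [zero_add, show -π + 2 * π = π by ring] at hshift
  rw [hshift, intervalIntegral.integral_of_le (by linarith [pi_pos]), integral_Ioc_eq_integral_Ioo,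
    ← Real.enorm_of_nonneg (setIntegral_nonneg measurableSet_Ioo fun _ _ => norm_nonneg _)]
  simpa using enorm_integral_le_lintegral_enorm (μ := volume.restrict (Ioo (-π) π))
    fun θ => ‖g (circleMap 0 ρ θ)‖

noncomputable def lacunaryCoeff (a : ℕ → ℂ) : ℕ → ℂ :=
  Function.extend (fun k : ℕ => 2 ^ (k + 1)) (fun k => a (k + 1)) 0

theorem two_pow_succ_injective : Function.Injective fun k : ℕ => 2 ^ (k + 1) :=
  fun _ _ h => by simpa using Nat.pow_right_injective le_rfl h

theorem lacunaryCoeff_two_pow (a : ℕ → ℂ) (k : ℕ) : lacunaryCoeff a (2 ^ (k + 1)) = a (k + 1) :=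
  two_pow_succ_injective.extend_apply _ _ k

theorem hasSum_lacunaryCoeff_mul_pow_iff (a : ℕ → ℂ) (z s : ℂ) :
    HasSum (fun n => lacunaryCoeff a n * z ^ n) s ↔
      HasSum (fun k => a (k + 1) * z ^ 2 ^ (k + 1)) s := by
  have : (fun n => lacunaryCoeff a n * z ^ n) =
      Function.extend (fun k : ℕ => 2 ^ (k + 1)) (fun k => a (k + 1) * z ^ 2 ^ (k + 1)) 0 := by
    funext n
    by_cases hn : ∃ k, 2 ^ (k + 1) = n
    · obtain ⟨k, rfl⟩ := hn
      rw [lacunaryCoeff_two_pow, two_pow_succ_injective.extend_apply]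
    · simp [lacunaryCoeff, Function.extend_apply' _ _ _ hn]
  rw [this, hasSum_extend_zero two_pow_succ_injective]

noncomputable def dyadicRadius (k : ℕ) : ℝ := 1 - (2 ^ (k + 2))⁻¹

theorem dyadicRadius_monotone : Monotone dyadicRadius := fun j k hjk => by
  unfold dyadicRadius
  gcongr
  norm_num

theorem dyadicRadius_pos (k : ℕ) : 0 < dyadicRadius k := by
  unfold dyadicRadius
  linarith [inv_lt_one_of_one_lt₀ (one_lt_pow₀ (one_lt_two (α := ℝ)) (by omega : k + 2 ≠ 0))]

theorem dyadicRadius_lt_one (k : ℕ) : dyadicRadius k < 1 := by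
  unfold dyadicRadius
  have : (0 : ℝ) < (2 ^ (k + 2))⁻¹ := by positivity
  linarith

theorem dyadicRadius_succ_sub (k : ℕ) :
    dyadicRadius (k + 1) - dyadicRadius k = (2 ^ (k + 3))⁻¹ := by
  unfold dyadicRadius
  rw [pow_succ _ (k + 2)]
  ring

theorem half_le_pow_of_dyadicRadius_le {k : ℕ} {ρ : ℝ} (hρ : dyadicRadius k ≤ ρ) :
    1 / 2 ≤ ρ ^ 2 ^ (k + 1) := by
  have hbern := one_add_mul_sub_le_pow (a := ρ) (by linarith [dyadicRadius_pos k]) (2 ^ (k + 1))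
  have : (2 : ℝ) ^ (k + 1) * (2 ^ (k + 2))⁻¹ = 1 / 2 := by
    rw [pow_succ _ (k + 1)]; field_simp
  unfold dyadicRadius at hρ
  push_cast at hbern
  nlinarith [pow_pos (two_pos (α := ℝ)) (k + 1)]

theorem tsum_setLIntegral_dyadic_annulus_le (F : ℝ → ℝ≥0∞) :
    ∑' k, ∫⁻ ρ in Ico (dyadicRadius k) (dyadicRadius (k + 1)), F ρ ≤ ∫⁻ ρ in Ioo 0 1, F ρ := by
  have hdisj : Pairwise (Function.onFun Disjoint fun k =>
      Ico (dyadicRadius k) (dyadicRadius (k + 1))) :=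
    dyadicRadius_monotone.pairwise_disjoint_on_Ico_succ
  rw [← lintegral_iUnion (fun _ => measurableSet_Ico) hdisj]
  exact lintegral_mono_set <| iUnion_subset fun k _ hρ =>
    ⟨(dyadicRadius_pos k).trans_le hρ.1, hρ.2.trans (dyadicRadius_lt_one _)⟩

section Lacunary

variable {f : ℂ → ℂ} {a : ℕ → ℂ}

theorem two_pow_mul_norm_mul_pow_le_of_hasSum_lacunary
    (hf : ∀ z ∈ ball (0 : ℂ) 1, HasSum (fun k : ℕ => a (k + 1) * z ^ (2 ^ (k + 1))) (f z))
    (k : ℕ) {ρ : ℝ} (hρ₀ : 0 < ρ) (hρ₁ : ρ < 1) :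
    2 ^ (k + 1) * ‖a (k + 1)‖ * ρ ^ 2 ^ (k + 1) ≤
      ρ * ((2 * π)⁻¹ * ∫ θ in 0..2 * π, ‖deriv f (circleMap 0 ρ θ)‖) := by
  have hseries : HasFPowerSeriesOnBall f (.ofScalars ℂ (lacunaryCoeff a)) 0 1 :=
    hasFPowerSeriesOnBall_ofScalars_of_hasSum one_pos fun z hz =>
      (hasSum_lacunaryCoeff_mul_pow_iff a z _).2 (hf z (by simpa using hz))
  simpa [FormalMultilinearSeries.coeff_ofScalars, lacunaryCoeff_two_pow] using
    hseries.mul_norm_coeff_mul_pow_le_integral_norm_deriv hρ₀ (by simpa using hρ₁) (2 ^ (k + 1))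

theorem ofReal_mul_two_pow_le_lintegral_circleMap_of_mem_Ico
    (hf : ∀ z ∈ ball (0 : ℂ) 1, HasSum (fun k : ℕ => a (k + 1) * z ^ (2 ^ (k + 1))) (f z))
    {k : ℕ} {ρ : ℝ} (hρ : ρ ∈ Ico (dyadicRadius k) (dyadicRadius (k + 1))) :
    ENNReal.ofReal (π * ‖a (k + 1)‖ * 2 ^ (k + 1)) ≤
      ENNReal.ofReal ρ * ∫⁻ θ in Ioo (-π) π, ‖deriv f (circleMap 0 ρ θ)‖ₑ := by
  have hρ₀ : 0 < ρ := (dyadicRadius_pos k).trans_le hρ.1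
  have hcoeff := two_pow_mul_norm_mul_pow_le_of_hasSum_lacunary hf k hρ₀
    (hρ.2.trans (dyadicRadius_lt_one _))
  have hhalf := half_le_pow_of_dyadicRadius_le hρ.1
  calc ENNReal.ofReal (π * ‖a (k + 1)‖ * 2 ^ (k + 1))
      ≤ ENNReal.ofReal (ρ * ∫ θ in 0..2 * π, ‖deriv f (circleMap 0 ρ θ)‖) := by
        refine ENNReal.ofReal_le_ofReal ?_
        calc π * ‖a (k + 1)‖ * 2 ^ (k + 1)
            = 2 * π * (2 ^ (k + 1) * ‖a (k + 1)‖ * (1 / 2)) := by ring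
          _ ≤ 2 * π * (2 ^ (k + 1) * ‖a (k + 1)‖ * ρ ^ 2 ^ (k + 1)) := by gcongr
          _ ≤ 2 * π * (ρ * ((2 * π)⁻¹ * ∫ θ in 0..2 * π, ‖deriv f (circleMap 0 ρ θ)‖)) := by
              gcongr
          _ = ρ * ∫ θ in 0..2 * π, ‖deriv f (circleMap 0 ρ θ)‖ := by field_simp
    _ ≤ ENNReal.ofReal ρ * ∫⁻ θ in Ioo (-π) π, ‖deriv f (circleMap 0 ρ θ)‖ₑ := by
        rw [ENNReal.ofReal_mul hρ₀.le]
        gcongr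
        exact ofReal_integral_norm_circleMap_le_lintegral _ _

theorem ofReal_mul_enorm_le_setLIntegral_dyadic_annulus
    (hf : ∀ z ∈ ball (0 : ℂ) 1, HasSum (fun k : ℕ => a (k + 1) * z ^ (2 ^ (k + 1))) (f z))
    (k : ℕ) :
    ENNReal.ofReal (π / 4) * ‖a (k + 1)‖ₑ ≤
      ∫⁻ ρ in Ico (dyadicRadius k) (dyadicRadius (k + 1)),
        ENNReal.ofReal ρ * ∫⁻ θ in Ioo (-π) π, ‖deriv f (circleMap 0 ρ θ)‖ₑ :=
  calc ENNReal.ofReal (π / 4) * ‖a (k + 1)‖ₑ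
      = ENNReal.ofReal (π * ‖a (k + 1)‖ * 2 ^ (k + 1)) *
          volume (Ico (dyadicRadius k) (dyadicRadius (k + 1))) := by
        rw [Real.volume_Ico, dyadicRadius_succ_sub, ← ENNReal.ofReal_mul (by positivity),
          ← ofReal_norm, ← ENNReal.ofReal_mul (by positivity), pow_add _ (k + 1) 2]
        congr 1
        field_simp
        ring
    _ = ∫⁻ _ in Ico (dyadicRadius k) (dyadicRadius (k + 1)),
          ENNReal.ofReal (π * ‖a (k + 1)‖ * 2 ^ (k + 1)) := (setLIntegral_const _ _).symm
    _ ≤ _ := setLIntegral_mono' measurableSet_Ico fun _ hρ =>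
          ofReal_mul_two_pow_le_lintegral_circleMap_of_mem_Ico hf hρ

end Lacunary

theorem stmt15_general (f : ℂ → ℂ) (a : ℕ → ℂ)
    (hf : ∀ z ∈ ball (0:ℂ) 1, HasSum (fun k : ℕ => a (k+1) * z ^ (2^(k+1))) (f z))
    (hint : ∫⁻ z in ball (0:ℂ) 1, (‖deriv f z‖₊ : ℝ≥0∞) < ⊤) :
    Summable fun k : ℕ => ‖a (k+1)‖ := by
  rw [← tsum_enorm_ne_top_iff_summable_norm]
  have hbound :
      ENNReal.ofReal (π / 4) * ∑' k, ‖a (k + 1)‖ₑ ≤ ∫⁻ z in ball (0 : ℂ) 1, ‖deriv f z‖ₑ :=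
    calc ENNReal.ofReal (π / 4) * ∑' k, ‖a (k + 1)‖ₑ
        = ∑' k, ENNReal.ofReal (π / 4) * ‖a (k + 1)‖ₑ := ENNReal.tsum_mul_left.symm
      _ ≤ ∑' k, ∫⁻ ρ in Ico (dyadicRadius k) (dyadicRadius (k + 1)),
            ENNReal.ofReal ρ * ∫⁻ θ in Ioo (-π) π, ‖deriv f (circleMap 0 ρ θ)‖ₑ :=
          ENNReal.tsum_le_tsum fun k => ofReal_mul_enorm_le_setLIntegral_dyadic_annulus hf k
      _ ≤ ∫⁻ ρ in Ioo 0 1,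
            ENNReal.ofReal ρ * ∫⁻ θ in Ioo (-π) π, ‖deriv f (circleMap 0 ρ θ)‖ₑ :=
          tsum_setLIntegral_dyadic_annulus_le _
      _ = ∫⁻ z in ball (0 : ℂ) 1, ‖deriv f z‖ₑ :=
          (setLIntegral_ball_eq_lintegral_circleMap (measurable_deriv f).enorm 1).symm
  exact (ENNReal.lt_top_of_mul_ne_top_right (hbound.trans_lt hint).ne (by simp [pi_pos])).ne

theorem stmt15 (f : ℂ → ℂ) (a : ℕ → ℂ)
    (hf : ∀ z ∈ ball (0:ℂ) 1, HasSum (fun k : ℕ => a (k+1) * z ^ (2^(k+1))) (f z))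
    (hdiff : DifferentiableOn ℂ f (ball (0:ℂ) 1))
    (hint : ∫⁻ z in ball (0:ℂ) 1, (‖deriv f z‖₊ : ℝ≥0∞) < ⊤) :
    Summable fun k : ℕ => ‖a (k+1)‖ :=
  stmt15_general f a hf hint
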